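/- The distribution on ℝ⁶ with coordinates (u, u_x, u_{xx}, x, y, v) defined by the PDE system u_y = ½(u_{xx})², u_{xy} = 0, v_y = u_{xx}, v_x = 0 is a (3,5,6)-distribution with constant symbol algebra g¹. -/

import Mathlib

noncomputable def vfLie {E : Type*} [NormedAddCommGroup E] [NormedSpace ℝ E]
    (V W : E → E) : E → E :=
  fun x => fderiv ℝ W x (V x) - fderiv ℝ V x (W x)

/- Coordinates: `p 0 = u, p 1 = u_x, p 2 = u_{xx}, p 3 = x, p 4 = y, p 5 = v`.
The prolongation of the PDE system `u_y = ½(u_{xx})², u_{xy} = 0, v_y = u_{xx},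
v_x = 0` is spanned by the total derivatives
`D_x = ∂_x + u_x∂_u + u_{xx}∂_{u_x}`, `D_y = ∂_y + ½(u_{xx})²∂_u + u_{xx}∂_v`
and `∂_{u_{xx}}`. -/

def DxVF : (Fin 6 → ℝ) → (Fin 6 → ℝ) := fun p => ![p 1, p 2, 0, 1, 0, 0]
noncomputable def DyVF : (Fin 6 → ℝ) → (Fin 6 → ℝ) := fun p => ![p 2 ^ 2 / 2, 0, 0, 0, 1, p 2]
def DuxxVF : (Fin 6 → ℝ) → (Fin 6 → ℝ) := fun _ => ![0, 0, 1, 0, 0, 0]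

/-! Every vector field that occurs has the form `a + u_x b + u_{xx} c + ½ u_{xx}² d` with constant
`a, b, c, d`, and the bracket of two such fields is given by one formula. With it,
`[D_x, D_y] = 0`, `[D_x, ∂_{u_xx}] = -∂_{u_x}`, `[D_y, ∂_{u_xx}] = -(∂_v + u_{xx} ∂_u)` and
`[D_x, [D_x, ∂_{u_xx}]] = ∂_u`; these six fields are pointwise independent, so the derived flag
grows as (3, 5, 6). The frame `-D_y, D_x, ∂_{u_xx}, ∂_v + u_{xx} ∂_u, -∂_{u_x}, ∂_u` has the
structure constants of `g¹`. -/

noncomputable def quadVF (a b c d : Fin 6 → ℝ) (p : Fin 6 → ℝ) : Fin 6 → ℝ :=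
  a + p 1 • b + p 2 • c + (p 2 ^ 2 / 2) • d

theorem fderiv_quadVF_apply (a b c d p v : Fin 6 → ℝ) :
    fderiv ℝ (quadVF a b c d) p v = v 1 • b + v 2 • (c + p 2 • d) := by
  have h1 := hasFDerivAt_apply (𝕜 := ℝ) (1 : Fin 6) p
  have h2 := hasFDerivAt_apply (𝕜 := ℝ) (2 : Fin 6) p
  have h := (((h1.smul_const b).add (h2.smul_const c)).const_add a).add
    (((h2.pow 2).mul_const (2⁻¹ : ℝ)).smul_const d)
  rw [(h.congr_of_eventuallyEq (.of_forall fun q => by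
    simp [quadVF, div_eq_mul_inv, add_assoc])).fderiv]
  simp only [add_apply, ContinuousLinearMap.smulRight_apply, ContinuousLinearMap.proj_apply,
    smul_apply]
  module

theorem vfLie_quadVF_apply (a b c d a' b' c' d' p : Fin 6 → ℝ) :
    vfLie (quadVF a b c d) (quadVF a' b' c' d') p =
      (quadVF a b c d p 1 • b' + quadVF a b c d p 2 • (c' + p 2 • d')) -
        (quadVF a' b' c' d' p 1 • b + quadVF a' b' c' d' p 2 • (c + p 2 • d)) := by
  simp only [vfLie, fderiv_quadVF_apply]

theorem contDiff_quadVF {n : WithTop ℕ∞} (a b c d : Fin 6 → ℝ) :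
    ContDiff ℝ n (quadVF a b c d) := by
  unfold quadVF
  fun_prop

theorem DxVF_eq_quadVF : DxVF = quadVF (Pi.single 3 1) (Pi.single 0 1) (Pi.single 1 1) 0 := by
  ext p i
  fin_cases i <;> simp [DxVF, quadVF]

theorem DyVF_eq_quadVF : DyVF = quadVF (Pi.single 4 1) 0 (Pi.single 5 1) (Pi.single 0 1) := by
  ext p i
  fin_cases i <;> simp [DyVF, quadVF]

theorem DuxxVF_eq_quadVF : DuxxVF = quadVF (Pi.single 2 1) 0 0 0 := by
  ext p i
  fin_cases i <;> simp [DuxxVF, quadVF]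

theorem vfLie_DxVF_DyVF : vfLie DxVF DyVF = 0 := by
  ext p i
  rw [DxVF_eq_quadVF, DyVF_eq_quadVF, vfLie_quadVF_apply]
  fin_cases i <;> simp [quadVF]

theorem vfLie_DxVF_DuxxVF : vfLie DxVF DuxxVF = quadVF (-Pi.single 1 1) 0 0 0 := by
  ext p i
  rw [DxVF_eq_quadVF, DuxxVF_eq_quadVF, vfLie_quadVF_apply]
  fin_cases i <;> simp [quadVF]

theorem vfLie_DyVF_DuxxVF :
    vfLie DyVF DuxxVF = quadVF (-Pi.single 5 1) 0 (-Pi.single 0 1) 0 := by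
  ext p i
  rw [DyVF_eq_quadVF, DuxxVF_eq_quadVF, vfLie_quadVF_apply]
  fin_cases i <;> simp [quadVF]

theorem vfLie_DxVF_vfLie_DxVF_DuxxVF :
    vfLie DxVF (vfLie DxVF DuxxVF) = quadVF (Pi.single 0 1) 0 0 0 := by
  ext p i
  rw [vfLie_DxVF_DuxxVF, DxVF_eq_quadVF, vfLie_quadVF_apply]
  fin_cases i <;> simp [quadVF]

theorem linearIndependent_D_brackets (p : Fin 6 → ℝ) :
    LinearIndependent ℝ ![DxVF p, DyVF p, DuxxVF p, vfLie DxVF DuxxVF p, vfLie DyVF DuxxVF p,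
      vfLie DxVF (vfLie DxVF DuxxVF) p] := by
  rw [vfLie_DxVF_vfLie_DxVF_DuxxVF, vfLie_DxVF_DuxxVF, vfLie_DyVF_DuxxVF,
    Fintype.linearIndependent_iff]
  intro g hg
  -- triangular: the `x, y, u_xx` coordinates give `g 0, g 1, g 2`, then `u_x, v, u` the rest
  have h : ∀ k, _ := congrFun hg
  simp [Fin.forall_fin_succ, Fin.sum_univ_six, DxVF, DyVF, DuxxVF, quadVF] at h
  intro i
  fin_cases i <;> grind

theorem linearIndependent_DxVF_DyVF_DuxxVF (p : Fin 6 → ℝ) :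
    LinearIndependent ℝ ![DxVF p, DyVF p, DuxxVF p] := by
  convert (linearIndependent_D_brackets p).comp (Fin.castLE (show 3 ≤ 6 by norm_num))
    (Fin.castLE_injective _) using 1
  ext i : 1
  fin_cases i <;> rfl

theorem finrank_span_D_brackets (p : Fin 6 → ℝ) :
    Module.finrank ℝ (Submodule.span ℝ
      ({DxVF p, DyVF p, DuxxVF p, vfLie DxVF DyVF p,
        vfLie DxVF DuxxVF p, vfLie DyVF DuxxVF p} : Set (Fin 6 → ℝ))) = 5 := by
  have hli : LinearIndependent ℝ
      ![DxVF p, DyVF p, DuxxVF p, vfLie DxVF DuxxVF p, vfLie DyVF DuxxVF p] := by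
    convert (linearIndependent_D_brackets p).comp Fin.castSucc (Fin.castSucc_injective _) using 1
    ext i : 1
    fin_cases i <;> rfl
  have hrange : Set.range ![DxVF p, DyVF p, DuxxVF p, vfLie DxVF DuxxVF p, vfLie DyVF DuxxVF p] =
      {DxVF p, DyVF p, DuxxVF p, vfLie DxVF DuxxVF p, vfLie DyVF DuxxVF p} := by
    simp only [Matrix.range_cons, Matrix.range_empty, Set.union_empty, Set.singleton_union]
  rw [vfLie_DxVF_DyVF, Pi.zero_apply, Set.insert_comm (DuxxVF p) 0, Set.insert_comm (DyVF p) 0,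
    Set.insert_comm (DxVF p) 0, Submodule.span_insert_zero, ← hrange, finrank_span_eq_card hli,
    Fintype.card_fin]

theorem span_D_brackets_eq_top (p : Fin 6 → ℝ) :
    Submodule.span ℝ
      ({DxVF p, DyVF p, DuxxVF p, vfLie DxVF DyVF p,
        vfLie DxVF DuxxVF p, vfLie DyVF DuxxVF p,
        vfLie DxVF (vfLie DxVF DyVF) p, vfLie DxVF (vfLie DxVF DuxxVF) p,
        vfLie DxVF (vfLie DyVF DuxxVF) p, vfLie DyVF (vfLie DxVF DyVF) p,
        vfLie DyVF (vfLie DxVF DuxxVF) p, vfLie DyVF (vfLie DyVF DuxxVF) p,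
        vfLie DuxxVF (vfLie DxVF DyVF) p, vfLie DuxxVF (vfLie DxVF DuxxVF) p,
        vfLie DuxxVF (vfLie DyVF DuxxVF) p} : Set (Fin 6 → ℝ)) = ⊤ := by
  refine eq_top_iff.2 <| ((linearIndependent_D_brackets p).span_eq_top_of_card_eq_finrank
    (by simp)).ge.trans (Submodule.span_mono ?_)
  rintro _ ⟨i, rfl⟩
  fin_cases i <;> simp

noncomputable def g1Frame : Fin 6 → (Fin 6 → ℝ) → (Fin 6 → ℝ) :=
  ![quadVF (-Pi.single 4 1) 0 (-Pi.single 5 1) (-Pi.single 0 1),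
    quadVF (Pi.single 3 1) (Pi.single 0 1) (Pi.single 1 1) 0,
    quadVF (Pi.single 2 1) 0 0 0,
    quadVF (Pi.single 5 1) 0 (Pi.single 0 1) 0,
    quadVF (-Pi.single 1 1) 0 0 0,
    quadVF (Pi.single 0 1) 0 0 0]

theorem contDiff_g1Frame (i : Fin 6) : ContDiff ℝ (⊤ : ℕ∞) (g1Frame i) := by
  fin_cases i <;> exact contDiff_quadVF _ _ _ _

theorem span_g1Frame (p : Fin 6 → ℝ) :
    Submodule.span ℝ {g1Frame 0 p, g1Frame 1 p, g1Frame 2 p} =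
      Submodule.span ℝ {DxVF p, DyVF p, DuxxVF p} := by
  have h0 : g1Frame 0 p = -DyVF p := by
    ext i
    fin_cases i <;> simp [g1Frame, DyVF, quadVF]
  have h1 : g1Frame 1 p = DxVF p := by rw [DxVF_eq_quadVF]; rfl
  have h2 : g1Frame 2 p = DuxxVF p := by rw [DuxxVF_eq_quadVF]; rfl
  rw [h0, h1, h2, Submodule.span_insert, ← Set.neg_singleton, Submodule.span_neg,
    ← Submodule.span_insert, Set.insert_comm]

theorem linearIndependent_g1Frame (p : Fin 6 → ℝ) :
    LinearIndependent ℝ ![g1Frame 0 p, g1Frame 1 p, g1Frame 2 p, g1Frame 3 p, g1Frame 4 p,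
      g1Frame 5 p] := by
  rw [Fintype.linearIndependent_iff]
  intro g hg
  have h : ∀ k, _ := congrFun hg
  simp [Fin.forall_fin_succ, Fin.sum_univ_six, g1Frame, quadVF] at h
  intro i
  fin_cases i <;> grind

/-- `E 0, …, E 5` stand for the basis `e₁, e₂, e₃, e₄, e₅, e₇` of `g¹`. -/
theorem stmt_16 :
    (∀ p, LinearIndependent ℝ ![DxVF p, DyVF p, DuxxVF p]) ∧
    (∀ p, Module.finrank ℝ (Submodule.span ℝ
      ({DxVF p, DyVF p, DuxxVF p, vfLie DxVF DyVF p,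
        vfLie DxVF DuxxVF p, vfLie DyVF DuxxVF p} : Set (Fin 6 → ℝ))) = 5) ∧
    (∀ p, Submodule.span ℝ
      ({DxVF p, DyVF p, DuxxVF p, vfLie DxVF DyVF p,
        vfLie DxVF DuxxVF p, vfLie DyVF DuxxVF p,
        vfLie DxVF (vfLie DxVF DyVF) p, vfLie DxVF (vfLie DxVF DuxxVF) p,
        vfLie DxVF (vfLie DyVF DuxxVF) p, vfLie DyVF (vfLie DxVF DyVF) p,
        vfLie DyVF (vfLie DxVF DuxxVF) p, vfLie DyVF (vfLie DyVF DuxxVF) p,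
        vfLie DuxxVF (vfLie DxVF DyVF) p, vfLie DuxxVF (vfLie DxVF DuxxVF) p,
        vfLie DuxxVF (vfLie DyVF DuxxVF) p} : Set (Fin 6 → ℝ)) = ⊤) ∧
    (∃ E : Fin 6 → ((Fin 6 → ℝ) → (Fin 6 → ℝ)),
      (∀ i, ContDiff ℝ (⊤ : ℕ∞) (E i)) ∧
      (∀ p, Submodule.span ℝ {E 0 p, E 1 p, E 2 p} =
        Submodule.span ℝ {DxVF p, DyVF p, DuxxVF p}) ∧
      (∀ p, LinearIndependent ℝ ![E 0 p, E 1 p, E 2 p, E 3 p, E 4 p, E 5 p]) ∧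
      vfLie (E 0) (E 2) = E 3 ∧ vfLie (E 1) (E 2) = E 4 ∧ vfLie (E 1) (E 4) = E 5 ∧
      vfLie (E 2) (E 3) = E 5 ∧
      vfLie (E 0) (E 1) = 0 ∧ vfLie (E 0) (E 3) = 0 ∧ vfLie (E 0) (E 4) = 0 ∧
      vfLie (E 0) (E 5) = 0 ∧ vfLie (E 1) (E 3) = 0 ∧ vfLie (E 1) (E 5) = 0 ∧
      vfLie (E 2) (E 4) = 0 ∧ vfLie (E 2) (E 5) = 0 ∧
      vfLie (E 3) (E 4) = 0 ∧ vfLie (E 3) (E 5) = 0 ∧ vfLie (E 4) (E 5) = 0) := by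
  refine ⟨linearIndependent_DxVF_DyVF_DuxxVF, finrank_span_D_brackets, span_D_brackets_eq_top,
    g1Frame, contDiff_g1Frame, span_g1Frame, linearIndependent_g1Frame, ?_⟩
  and_intros
  all_goals
    ext p k
    simp only [g1Frame, Matrix.cons_val, vfLie_quadVF_apply]
    fin_cases k <;> simp [quadVF]
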